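/- For two subspaces U and W of R^n with orthogonal projection matrices P_U and P_W, the operator norm ‖P_U − P_W‖ equals the sine of the largest principal angle between U and W whenever dim U = dim W. -/

import Mathlib

/-!
Let `V`, `W` be the isometries `ℝ^p → ℝ^n` given by `BU`, `BW`, so that `P_U = V V†`,
`P_W = W W†` and `V† W = BUᵀ BW`. For every `x`, `(P_U - P_W) x = P_Wᗮ (P_U x) - P_W (P_Uᗮ x)`
is an orthogonal decomposition, hence `‖P_U - P_W‖ ≤ c` as soon as `‖P_Wᗮ P_U‖ ≤ c` and
`‖P_W P_Uᗮ‖ = ‖P_Uᗮ P_W‖ ≤ c`. Since `‖P_Wᗮ (V y)‖² = ‖y‖² - ‖W† V y‖²`, both bounds hold with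
`c = √(1 - σ²)` when `σ` bounds `V† W` and its adjoint `W† V` from below. Because `V† W` is
square, its smallest singular value `σ` is such a bound for both. The bound is attained at
`x = W v` for a unit vector `v` with `‖V† W v‖ = σ`: there `(P_U - P_W) x = -P_Uᗮ x`, of norm
`√(1 - σ²) = sin (arccos σ)`.
-/

open Matrix

/-- View a plain vector as an element of Euclidean space. -/
noncomputable def toEuc {n : ℕ} (v : Fin n → ℝ) : EuclideanSpace ℝ (Fin n) := WithLp.toLp 2 v

/-- The row space of a matrix, as a subspace of Euclidean space `ℝ^n`. -/
noncomputable def rowSpace {m : Type*} {n : ℕ} (A : Matrix m (Fin n) ℝ) :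
    Submodule ℝ (EuclideanSpace ℝ (Fin n)) :=
  Submodule.span ℝ (Set.range fun i => toEuc (A i))

/-- The orthogonal projection matrix onto a subspace of `ℝ^n`. -/
noncomputable def projMat {n : ℕ} (U : Submodule ℝ (EuclideanSpace ℝ (Fin n))) :
    Matrix (Fin n) (Fin n) ℝ :=
  Matrix.toEuclideanLin.symm (U.subtype ∘ₗ U.orthogonalProjectionOnto.toLinearMap)

/-- The operator (spectral) norm of a matrix. -/
noncomputable def opNorm {m : Type*} [Fintype m] {n : ℕ} (A : Matrix m (Fin n) ℝ) : ℝ :=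
  ‖(Matrix.toEuclideanLin A).toContinuousLinearMap‖

/-- Singular values of a matrix, in ascending order. -/
noncomputable def svalAsc {m : Type*} [Fintype m] {n : ℕ} (A : Matrix m (Fin n) ℝ) :
    Fin n → ℝ := fun i =>
  Real.sqrt ((show (Aᵀ * A).IsHermitian by simpa [Matrix.conjTranspose_eq_transpose_of_trivial] using
      Matrix.isHermitian_conjTranspose_mul_self A).eigenvalues
    (Tuple.sort (show (Aᵀ * A).IsHermitian by simpa [Matrix.conjTranspose_eq_transpose_of_trivial] using
      Matrix.isHermitian_conjTranspose_mul_self A).eigenvalues i))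

/-- Singular values of a matrix, in descending order (`svalDesc A 0` is the largest). -/
noncomputable def svalDesc {m : Type*} [Fintype m] {n : ℕ} (A : Matrix m (Fin n) ℝ)
    (i : Fin n) : ℝ :=
  svalAsc A i.rev

open scoped InnerProductSpace InnerProduct

theorem Tuple.apply_sort_zero_le {α : Type*} [LinearOrder α] {k : ℕ} (f : Fin k → α)
    (hk : 0 < k) (i : Fin k) : f (Tuple.sort f ⟨0, hk⟩) ≤ f i := by
  have := Tuple.monotone_sort f (show (⟨0, hk⟩ : Fin k) ≤ (Tuple.sort f).symm i from Nat.zero_le _)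
  rwa [Function.comp_apply, Function.comp_apply, Equiv.apply_symm_apply] at this

section

variable {𝕜 E : Type*} [RCLike 𝕜] [NormedAddCommGroup E] [InnerProductSpace 𝕜 E] [CompleteSpace E]

open ContinuousLinearMap

namespace Submodule

variable (U W : Submodule 𝕜 E) [U.HasOrthogonalProjection] [W.HasOrthogonalProjection]

theorem norm_starProjection_starProjection_orthogonal_le {c : ℝ} (hc : 0 ≤ c)
    (hWU : ∀ x ∈ W, ‖Uᗮ.starProjection x‖ ≤ c * ‖x‖) (x : E) :
    ‖W.starProjection (Uᗮ.starProjection x)‖ ≤ c * ‖Uᗮ.starProjection x‖ := by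
  set T := Uᗮ.starProjection ∘L W.starProjection
  have hT : ‖T‖ ≤ c := opNorm_le_bound _ hc fun y ↦
    (hWU _ (W.starProjection_apply_mem y)).trans
      (mul_le_mul_of_nonneg_left (W.norm_starProjection_apply_le y) hc)
  have hT' : T† = W.starProjection ∘L Uᗮ.starProjection := by
    simp only [T, adjoint_comp, (isSelfAdjoint_starProjection _).adjoint_eq]
  calc ‖W.starProjection (Uᗮ.starProjection x)‖
      = ‖(T†) (Uᗮ.starProjection x)‖ := by
        rw [hT', ContinuousLinearMap.comp_apply,
          Uᗮ.starProjection_eq_self_iff.mpr (Uᗮ.starProjection_apply_mem x)]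
    _ ≤ c * ‖Uᗮ.starProjection x‖ := by
        grw [le_opNorm, adjoint.norm_map, hT]

theorem norm_starProjection_sub_starProjection_le {c : ℝ} (hc : 0 ≤ c)
    (hUW : ∀ x ∈ U, ‖Wᗮ.starProjection x‖ ≤ c * ‖x‖)
    (hWU : ∀ x ∈ W, ‖Uᗮ.starProjection x‖ ≤ c * ‖x‖) :
    ‖U.starProjection - W.starProjection‖ ≤ c := by
  refine opNorm_le_bound _ hc fun x ↦ ?_
  set a := Wᗮ.starProjection (U.starProjection x)
  set b := W.starProjection (Uᗮ.starProjection x)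
  have hsplit : (U.starProjection - W.starProjection) x = a - b := by
    simp only [a, b, starProjection_orthogonal, _root_.sub_apply, id_apply, map_sub]
    abel
  have horth : ⟪a, b⟫_𝕜 = 0 :=
    W.inner_left_of_mem_orthogonal (W.starProjection_apply_mem _) (Wᗮ.starProjection_apply_mem _)
  have hsq : ‖(U.starProjection - W.starProjection) x‖ ^ 2 ≤ (c * ‖x‖) ^ 2 := calc
    _ = ‖a‖ ^ 2 + ‖b‖ ^ 2 := by rw [hsplit, @norm_sub_sq 𝕜, horth]; simp
    _ ≤ (c * ‖U.starProjection x‖) ^ 2 + (c * ‖Uᗮ.starProjection x‖) ^ 2 := by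
      gcongr
      · exact hUW _ (U.starProjection_apply_mem x)
      · exact norm_starProjection_starProjection_orthogonal_le U W hc hWU x
    _ = (c * ‖x‖) ^ 2 := by
      rw [mul_pow, mul_pow, mul_pow, ← mul_add, ← U.norm_sq_eq_add_norm_sq_starProjection x]
  exact (pow_le_pow_iff_left₀ (norm_nonneg _) (by positivity) two_ne_zero).mp hsq

end Submodule

namespace ContinuousLinearMap

section Isometry

variable {F : Type*} [NormedAddCommGroup F] [InnerProductSpace 𝕜 F] [CompleteSpace F]
  {V W : F →L[𝕜] E}

theorem starProjection_range_eq_comp_adjoint (hV : V† ∘L V = 1)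
    [V.range.HasOrthogonalProjection] :
    V.range.starProjection = V ∘L V† := by
  have hproj : IsStarProjection (V ∘L V†) := by
    refine ⟨?_, ?_⟩
    · change (V ∘L V†) ∘L (V ∘L V†) = V ∘L V†
      rw [comp_assoc, ← comp_assoc (V†), hV, one_def, id_comp]
    · rw [isSelfAdjoint_iff', adjoint_comp, adjoint_adjoint]
  obtain ⟨_, h⟩ := isStarProjection_iff_eq_starProjection_range.mp hproj
  have hrange : (V ∘L V†).range = V.range := by
    refine le_antisymm (LinearMap.range_comp_le_range _ _) ?_
    rintro _ ⟨y, rfl⟩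
    exact ⟨V y, by simp [← ContinuousLinearMap.comp_apply (V†) V, hV]⟩
  conv_rhs => rw [h]
  congr 1
  exact hrange.symm

theorem norm_sq_starProjection_orthogonal_range_apply (hV : V† ∘L V = 1)
    [V.range.HasOrthogonalProjection] (x : E) :
    ‖V.rangeᗮ.starProjection x‖ ^ 2 = ‖x‖ ^ 2 - ‖(V†) x‖ ^ 2 := by
  rw [V.range.norm_sq_eq_add_norm_sq_starProjection x, starProjection_range_eq_comp_adjoint hV,
    ContinuousLinearMap.comp_apply, (norm_map_iff_adjoint_comp_self V).mpr hV]
  ring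

theorem norm_starProjection_orthogonal_range_le (hV : V† ∘L V = 1) (hW : W† ∘L W = 1)
    [W.range.HasOrthogonalProjection] {σ : ℝ} (hσ : 0 ≤ σ) (hVW : ∀ y, σ * ‖y‖ ≤ ‖(W†) (V y)‖) :
    ∀ x ∈ V.range, ‖W.rangeᗮ.starProjection x‖ ≤ √(1 - σ ^ 2) * ‖x‖ := by
  rintro _ ⟨y, rfl⟩
  rw [coe_coe]
  have hy : ‖V y‖ = ‖y‖ := (norm_map_iff_adjoint_comp_self V).mpr hV y
  have hsq : ‖W.rangeᗮ.starProjection (V y)‖ ^ 2 ≤ (1 - σ ^ 2) * ‖y‖ ^ 2 := by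
    rw [norm_sq_starProjection_orthogonal_range_apply hW, hy]
    nlinarith [hVW y, mul_nonneg hσ (norm_nonneg y)]
  rw [hy, ← Real.sqrt_sq (norm_nonneg (W.rangeᗮ.starProjection (V y))),
    ← Real.sqrt_sq (norm_nonneg y), ← Real.sqrt_mul' _ (sq_nonneg _)]
  exact Real.sqrt_le_sqrt hsq

theorem norm_starProjection_range_sub_le (hV : V† ∘L V = 1) (hW : W† ∘L W = 1)
    [V.range.HasOrthogonalProjection] [W.range.HasOrthogonalProjection] {σ : ℝ} (hσ : 0 ≤ σ)
    (hVW : ∀ y, σ * ‖y‖ ≤ ‖(W†) (V y)‖) (hWV : ∀ y, σ * ‖y‖ ≤ ‖(V†) (W y)‖) :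
    ‖V.range.starProjection - W.range.starProjection‖ ≤ √(1 - σ ^ 2) :=
  Submodule.norm_starProjection_sub_starProjection_le _ _ (Real.sqrt_nonneg _)
    (norm_starProjection_orthogonal_range_le hV hW hσ hVW)
    (norm_starProjection_orthogonal_range_le hW hV hσ hWV)

theorem sqrt_le_norm_starProjection_range_sub (hV : V† ∘L V = 1) (hW : W† ∘L W = 1)
    [V.range.HasOrthogonalProjection] [W.range.HasOrthogonalProjection] {σ : ℝ} {v : F}
    (hv : ‖v‖ = 1) (hσ : ‖(V†) (W v)‖ = σ) :
    √(1 - σ ^ 2) ≤ ‖V.range.starProjection - W.range.starProjection‖ := by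
  have hWv : ‖W v‖ = 1 := ((norm_map_iff_adjoint_comp_self W).mpr hW v).trans hv
  have hWW : W.range.starProjection (W v) = W v :=
    W.range.starProjection_eq_self_iff.mpr ⟨v, rfl⟩
  have hdiff : (V.range.starProjection - W.range.starProjection) (W v)
      = -V.rangeᗮ.starProjection (W v) := by
    simp [Submodule.starProjection_orthogonal, hWW]
  calc √(1 - σ ^ 2) = ‖(V.range.starProjection - W.range.starProjection) (W v)‖ := by
        rw [hdiff, norm_neg, ← Real.sqrt_sq (norm_nonneg _),
          norm_sq_starProjection_orthogonal_range_apply hV, hWv, hσ, one_pow]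
    _ ≤ ‖V.range.starProjection - W.range.starProjection‖ := by
        simpa [hWv] using le_opNorm (V.range.starProjection - W.range.starProjection) (W v)

end Isometry

theorem mul_norm_le_norm_adjoint_apply [FiniteDimensional 𝕜 E] {K : E →L[𝕜] E} {σ : ℝ}
    (h : ∀ v, σ * ‖v‖ ≤ ‖K v‖) (y : E) : σ * ‖y‖ ≤ ‖(K†) y‖ := by
  rcases le_or_gt σ 0 with hσ | hσ
  · exact (mul_nonpos_of_nonpos_of_nonneg hσ (norm_nonneg y)).trans (norm_nonneg _)
  have hinj : Function.Injective (K : E →ₗ[𝕜] E) := by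
    refine (injective_iff_map_eq_zero K).mpr fun v hv ↦ norm_eq_zero.mp ?_
    have := h v
    rw [hv, norm_zero] at this
    nlinarith [norm_nonneg v]
  -- `K` is onto, and for `y = K w` we have `‖y‖² = re ⟪K† y, w⟫ ≤ ‖K† y‖ ‖w‖`.
  obtain ⟨w, rfl⟩ := LinearMap.injective_iff_surjective.mp hinj y
  have hKw : ‖K w‖ ^ 2 ≤ ‖(K†) (K w)‖ * ‖w‖ := by
    rw [← inner_self_eq_norm_sq (𝕜 := 𝕜), ← adjoint_inner_left]
    exact re_inner_le_norm _ _
  rw [coe_coe]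
  rcases eq_or_ne w 0 with rfl | hw
  · simp
  refine le_of_mul_le_mul_right ?_ (norm_pos_iff.mpr hw)
  nlinarith [h w, norm_nonneg (K w)]

end ContinuousLinearMap

end

namespace Matrix

section

variable {𝕜 m n l : Type*} [RCLike 𝕜] [Fintype m] [DecidableEq m] [Fintype n] [DecidableEq n]
  [Fintype l] [DecidableEq l]

theorem adjoint_toEuclideanLin_comp_toEuclideanLin (A : Matrix m n 𝕜) (B : Matrix m l 𝕜) :
    (toEuclideanLin A).toContinuousLinearMap† ∘L (toEuclideanLin B).toContinuousLinearMap
      = (toEuclideanLin (Aᴴ * B)).toContinuousLinearMap := by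
  rw [← LinearMap.adjoint_toContinuousLinearMap, ← toEuclideanLin_conjTranspose_eq_adjoint]
  ext1 x
  simp

theorem adjoint_toEuclideanLin_comp_self {A : Matrix m n 𝕜} (hA : Aᴴ * A = 1) :
    (toEuclideanLin A).toContinuousLinearMap† ∘L (toEuclideanLin A).toContinuousLinearMap = 1 := by
  rw [adjoint_toEuclideanLin_comp_toEuclideanLin, hA, toLpLin_one]
  rfl

theorem inner_toEuclideanLin_conjTranspose_mul_self (A : Matrix m n 𝕜) (x : EuclideanSpace 𝕜 n) :
    ⟪x, toEuclideanLin (Aᴴ * A) x⟫_𝕜 = (‖toEuclideanLin A x‖ ^ 2 : 𝕜) := by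
  rw [← LinearMap.coe_toContinuousLinearMap' (toEuclideanLin (Aᴴ * A)),
    ← adjoint_toEuclideanLin_comp_toEuclideanLin, ContinuousLinearMap.comp_apply,
    ContinuousLinearMap.adjoint_inner_right, inner_self_eq_norm_sq_to_K]
  rfl

namespace IsHermitian

variable {S : Matrix n n 𝕜} (hS : S.IsHermitian)

theorem toEuclideanLin_eigenvectorBasis (j : n) :
    toEuclideanLin S (hS.eigenvectorBasis j) = (hS.eigenvalues j : 𝕜) • hS.eigenvectorBasis j := by
  rw [toLpLin_apply, hS.mulVec_eigenvectorBasis, ← RCLike.real_smul_eq_coe_smul]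
  rfl

theorem re_inner_toEuclideanLin_eq_sum (x : EuclideanSpace 𝕜 n) :
    RCLike.re ⟪x, toEuclideanLin S x⟫_𝕜
      = ∑ i, hS.eigenvalues i * ‖⟪hS.eigenvectorBasis i, x⟫_𝕜‖ ^ 2 := by
  rw [← hS.eigenvectorBasis.sum_inner_mul_inner, map_sum]
  refine Finset.sum_congr rfl fun i _ ↦ ?_
  rw [← isSymmetric_toEuclideanLin_iff.mpr hS, toEuclideanLin_eigenvectorBasis, inner_smul_left,
    RCLike.conj_ofReal, mul_left_comm, ← inner_conj_symm x, RCLike.conj_mul, RCLike.re_ofReal_mul]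
  norm_cast

theorem eigenvalues_mul_norm_sq_le {j : n} (hj : ∀ i, hS.eigenvalues j ≤ hS.eigenvalues i)
    (x : EuclideanSpace 𝕜 n) :
    hS.eigenvalues j * ‖x‖ ^ 2 ≤ RCLike.re ⟪x, toEuclideanLin S x⟫_𝕜 := by
  rw [re_inner_toEuclideanLin_eq_sum hS, ← hS.eigenvectorBasis.sum_sq_norm_inner_right,
    Finset.mul_sum]
  exact Finset.sum_le_sum fun i _ ↦ mul_le_mul_of_nonneg_right (hj i) (sq_nonneg _)

end IsHermitian

end

section SingularValues

variable {m : Type*} [Fintype m] {k : ℕ}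

theorem svalAsc_eq_sqrt_eigenvalues (C : Matrix m (Fin k) ℝ) (i : Fin k) :
    svalAsc C i = √((isHermitian_conjTranspose_mul_self C).eigenvalues
      (Tuple.sort (isHermitian_conjTranspose_mul_self C).eigenvalues i)) :=
  rfl

theorem svalAsc_nonneg (C : Matrix m (Fin k) ℝ) (i : Fin k) : 0 ≤ svalAsc C i :=
  Real.sqrt_nonneg _

theorem svalAsc_zero_mul_norm_le (C : Matrix m (Fin k) ℝ) (hk : 0 < k)
    (v : EuclideanSpace ℝ (Fin k)) : svalAsc C ⟨0, hk⟩ * ‖v‖ ≤ ‖toEuclideanLin C v‖ := by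
  classical
  set hS := isHermitian_conjTranspose_mul_self C
  have hmin := hS.eigenvalues_mul_norm_sq_le (Tuple.apply_sort_zero_le _ hk) v
  rw [inner_toEuclideanLin_conjTranspose_mul_self, RCLike.re_to_real] at hmin
  rw [svalAsc_eq_sqrt_eigenvalues, ← pow_le_pow_iff_left₀ (by positivity) (norm_nonneg _)
    two_ne_zero, mul_pow, Real.sq_sqrt (eigenvalues_conjTranspose_mul_self_nonneg C _)]
  exact hmin

theorem exists_norm_eq_one_norm_toEuclideanLin_eq_svalAsc_zero (C : Matrix m (Fin k) ℝ)
    (hk : 0 < k) :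
    ∃ v : EuclideanSpace ℝ (Fin k), ‖v‖ = 1 ∧ ‖toEuclideanLin C v‖ = svalAsc C ⟨0, hk⟩ := by
  classical
  set hS := isHermitian_conjTranspose_mul_self C
  set j := Tuple.sort hS.eigenvalues ⟨0, hk⟩
  have hv : ‖hS.eigenvectorBasis j‖ = 1 := hS.eigenvectorBasis.orthonormal.1 j
  refine ⟨hS.eigenvectorBasis j, hv, ?_⟩
  have hCv := inner_toEuclideanLin_conjTranspose_mul_self C (hS.eigenvectorBasis j)
  rw [hS.toEuclideanLin_eigenvectorBasis, real_inner_smul_right, real_inner_self_eq_norm_sq, hv]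
    at hCv
  rw [svalAsc_eq_sqrt_eigenvalues, ← Real.sqrt_sq (norm_nonneg (toEuclideanLin C _))]
  simpa using congrArg Real.sqrt hCv.symm

end SingularValues

end Matrix

theorem rowSpace_transpose {n : ℕ} {k : Type*} [Fintype k] [DecidableEq k]
    (A : Matrix (Fin n) k ℝ) : rowSpace Aᵀ = LinearMap.range (toEuclideanLin A) := by
  rw [rowSpace, LinearMap.range_eq_map, ← (EuclideanSpace.basisFun k ℝ).toBasis.span_eq,
    Submodule.map_span, ← Set.range_comp]
  congr 2
  ext j i
  simp [toEuc]

theorem opNorm_projMat_sub_projMat {n : ℕ} (U W : Submodule ℝ (EuclideanSpace ℝ (Fin n))) :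
    opNorm (projMat U - projMat W) = ‖U.starProjection - W.starProjection‖ := by
  rw [opNorm, projMat, projMat, map_sub, LinearEquiv.apply_symm_apply,
    LinearEquiv.apply_symm_apply]
  rfl

/-- The cosines of the principal angles between `U` and `W` are the singular values of
`BUᵀ * BW`, so the largest angle is the `arccos` of the smallest one. -/
theorem opNorm_sub_proj_eq_sin_max_principal_angle_general (n p : ℕ) (hp : 0 < p)
    (U W : Submodule ℝ (EuclideanSpace ℝ (Fin n)))
    (BU BW : Matrix (Fin n) (Fin p) ℝ)
    (hBU1 : BUᵀ * BU = 1) (hBU2 : rowSpace BUᵀ = U)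
    (hBW1 : BWᵀ * BW = 1) (hBW2 : rowSpace BWᵀ = W) :
    opNorm (projMat U - projMat W)
      = Real.sin (Real.arccos (svalAsc (BUᵀ * BW) ⟨0, hp⟩)) := by
  set VU := (toEuclideanLin BU).toContinuousLinearMap
  set VW := (toEuclideanLin BW).toContinuousLinearMap
  set σ := svalAsc (BUᵀ * BW) ⟨0, hp⟩
  have hVU : VU† ∘L VU = 1 :=
    adjoint_toEuclideanLin_comp_self (by rwa [conjTranspose_eq_transpose_of_trivial])
  have hVW : VW† ∘L VW = 1 :=
    adjoint_toEuclideanLin_comp_self (by rwa [conjTranspose_eq_transpose_of_trivial])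
  have hK : VU† ∘L VW = (toEuclideanLin (BUᵀ * BW)).toContinuousLinearMap := by
    rw [adjoint_toEuclideanLin_comp_toEuclideanLin, conjTranspose_eq_transpose_of_trivial]
  have hσK : ∀ y, σ * ‖y‖ ≤ ‖(VU†) (VW y)‖ := fun y ↦ by
    rw [← ContinuousLinearMap.comp_apply, hK]
    exact svalAsc_zero_mul_norm_le _ hp y
  have hσK' : ∀ y, σ * ‖y‖ ≤ ‖(VW†) (VU y)‖ := fun y ↦ by
    have := ContinuousLinearMap.mul_norm_le_norm_adjoint_apply (K := VU† ∘L VW) hσK y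
    rwa [ContinuousLinearMap.adjoint_comp, ContinuousLinearMap.adjoint_adjoint] at this
  obtain ⟨v, hv, hKv⟩ := exists_norm_eq_one_norm_toEuclideanLin_eq_svalAsc_zero (BUᵀ * BW) hp
  have hσv : ‖(VU†) (VW v)‖ = σ := by rw [← ContinuousLinearMap.comp_apply, hK]; exact hKv
  subst hBU2 hBW2
  rw [opNorm_projMat_sub_projMat, rowSpace_transpose, rowSpace_transpose, Real.sin_arccos]
  exact le_antisymm
    (ContinuousLinearMap.norm_starProjection_range_sub_le hVU hVW (svalAsc_nonneg _ _) hσK' hσK)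
    (ContinuousLinearMap.sqrt_le_norm_starProjection_range_sub hVU hVW hv hσv)

/-- for subspaces `U`, `W` of `ℝ^n` of equal dimension (here both have
orthonormal basis matrices with `p` columns), the operator norm `‖P_U − P_W‖` equals the
sine of the largest principal angle between `U` and `W`, where the cosines of the principal
angles are the singular values of `BUᵀ * BW` (so the largest angle corresponds to the
smallest singular value). -/
theorem opNorm_sub_proj_eq_sin_max_principal_angle (n p : ℕ) (hp : 0 < p)
    (U W : Submodule ℝ (EuclideanSpace ℝ (Fin n)))
    (BU BW : Matrix (Fin n) (Fin p) ℝ)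
    (hBU1 : BUᵀ * BU = 1) (hBU2 : rowSpace BUᵀ = U)
    (hBW1 : BWᵀ * BW = 1) (hBW2 : rowSpace BWᵀ = W)
    (hdim : Module.finrank ℝ U = Module.finrank ℝ W) :
    opNorm (projMat U - projMat W)
      = Real.sin (Real.arccos (svalAsc (BUᵀ * BW) ⟨0, hp⟩)) :=
  opNorm_sub_proj_eq_sin_max_principal_angle_general n p hp U W BU BW hBU1 hBU2 hBW1 hBW2
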